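/- Let T be a closed, consistent, and suffix-closed observation table for L ⊆ GS, and let H := H(T) be its hypothesis PNKA. Then for all prefixes s, t ∈ Pref: ∂⁺(s) = ∂⁺(t) (computed in H) if and only if s ≡_{L(H)} t, where ≡_{L(H)} is the NetKAT Myhill–Nerode relation of the language L(H). -/
import Mathlib


namespace NetKATLearn

variable {F V : Type}

/-- A packet assigns a value to each field. -/
abbrev Packet (F V : Type) : Type := F → V

/-- A guarded string `(α, w, β)`, representing the trace `α·(w₁·dup)⋯(wₖ·dup)·β`. -/
abbrev GString (F V : Type) : Type := Packet F V × List (Packet F V) × Packet F V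

/-- A guarded string prefix `(α, w)`. -/
abbrev GPrefix (F V : Type) : Type := Packet F V × List (Packet F V)

/-- A guarded string suffix `(m, β)`. -/
abbrev GSuffix (F V : Type) : Type := List (Packet F V) × Packet F V

/-- `last(p)`: the last element of `w` if `w` is nonempty, and `α` otherwise. -/
def lastP (p : GPrefix F V) : Packet F V := p.2.getLast?.getD p.1

-- Partial concatenation `p ◆ g` of a prefix with a guarded string:
-- defined iff `last p = g.1`, in which case it is `(p.1, p.2 ++ g.2.1, g.2.2)`.
open Classical in
noncomputable def pconcat (p : GPrefix F V) (g : GString F V) : Option (GString F V) :=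
  if lastP p = g.1 then some (p.1, p.2 ++ g.2.1, g.2.2) else none

/-- The NetKAT Myhill–Nerode relation `s ≡_L t`: for every guarded string `g`,
`s ◆ g` and `t ◆ g` are both undefined, or both defined and agree on membership in `L`. -/
def MN (L : Set (GString F V)) (s t : GPrefix F V) : Prop :=
  ∀ g : GString F V,
    (pconcat s g).isSome = (pconcat t g).isSome ∧
      ∀ x ∈ pconcat s g, ∀ y ∈ pconcat t g, (x ∈ L ↔ y ∈ L)

/-- A packet-state NetKAT automaton (PNKA) with state type `Q`,
including the spelling property. -/
structure PNKA (F V Q : Type) where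
  q0 : Packet F V → Q
  tr : Q → Packet F V → Q
  obs : Q → Packet F V → Bool
  spell : ∀ (q q' : Q) (α β : Packet F V),
    (tr q α = tr q' β ∨ q0 α = q0 β ∨ q0 α = tr q β) → α = β

/-- Acceptance of a PNKA from a state. -/
def PNKA.run {Q : Type} (M : PNKA F V Q) : Q → List (Packet F V) → Packet F V → Bool
  | q, [], β => M.obs q β
  | q, β :: m, γ => M.run (M.tr q β) m γ

/-- The language of a PNKA. -/
def PNKA.lang {Q : Type} (M : PNKA F V Q) : Set (GString F V) :=
  {g | M.run (M.q0 g.1) g.2.1 g.2.2 = true}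

/-- `∂⁺ p`: the state reached after processing the prefix `p`. -/
def PNKA.dplus {Q : Type} (M : PNKA F V Q) (p : GPrefix F V) : Q :=
  p.2.foldl M.tr (M.q0 p.1)

/-- Concatenation `p·e` of a prefix and a suffix, yielding a guarded string. -/
def sdot (p : GPrefix F V) (e : GSuffix F V) : GString F V := (p.1, p.2 ++ e.1, e.2)

/-- An observation table: a packet table `(S_α, E_α)` for each packet `α`. -/
structure ObsTable (F V : Type) where
  S : Packet F V → Set (GPrefix F V)
  E : Packet F V → Set (GSuffix F V)
  S_fin : ∀ α, (S α).Finite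
  E_fin : ∀ α, (E α).Finite
  S_last : ∀ α p, p ∈ S α → lastP p = α
  S_init : ∀ α, (α, ([] : List (Packet F V))) ∈ S α
  E_init : ∀ α β, (([] : List (Packet F V)), β) ∈ E α

/-- `S'_α`: the `(α·dup)`-extensions of all table prefixes. -/
def ObsTable.Sx (T : ObsTable F V) (α : Packet F V) : Set (GPrefix F V) :=
  {p | ∃ β, ∃ s ∈ T.S β, p = (s.1, s.2 ++ [α])}

-- `row_α(s)` as a Boolean function on suffixes: `true` on exactly the `e ∈ E_α`
-- with `s·e ∈ L`.  Two prefixes have equal rows (as functions on `E_α`) iff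
-- these functions are equal.
open Classical in
noncomputable def rowF (L : Set (GString F V)) (T : ObsTable F V) (α : Packet F V)
    (s : GPrefix F V) : GSuffix F V → Bool :=
  fun e => decide (e ∈ T.E α ∧ sdot s e ∈ L)

/-- The observation table is closed. -/
def ObsTable.Closed (T : ObsTable F V) (L : Set (GString F V)) : Prop :=
  ∀ α p, p ∈ T.Sx α → ∃ s ∈ T.S α, rowF L T α s = rowF L T α p

/-- The observation table is consistent. -/
def ObsTable.Consistent (T : ObsTable F V) (L : Set (GString F V)) : Prop :=
  ∀ (α β : Packet F V) (s s' : GPrefix F V), s ∈ T.S α → s' ∈ T.S α →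
    rowF L T α s = rowF L T α s' →
    rowF L T β (s.1, s.2 ++ [β]) = rowF L T β (s'.1, s'.2 ++ [β])

/-- The observation table is suffix-closed. -/
def ObsTable.SufClosed (T : ObsTable F V) : Prop :=
  ∀ (α β : Packet F V) (m : List (Packet F V)) (γ : Packet F V),
    (β :: m, γ) ∈ T.E α → (m, γ) ∈ T.E β

/-- States of the hypothesis automaton: the pairs `(α, row_α(s))` for `s ∈ S_α`. -/
def HState (L : Set (GString F V)) (T : ObsTable F V) : Type :=
  {x : Packet F V × (GSuffix F V → Bool) // ∃ s ∈ T.S x.1, rowF L T x.1 s = x.2}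

/-- The hypothesis PNKA `H(T)` built from a closed observation table:
`q₀ α = (α, row_α((α, [])))`, `∂ (α, row_α s) β = (β, row_β (s·(β·dup)))`, and
`λ (α, row_α s) β = T_α(s, ([], β))`. -/
noncomputable def hypAut (L : Set (GString F V)) (T : ObsTable F V)
    (hc : T.Closed L) : PNKA F V (HState L T) where
  q0 := fun α => ⟨(α, rowF L T α (α, [])), ⟨(α, []), T.S_init α, rfl⟩⟩
  tr := fun q β =>
    ⟨(β, rowF L T β ((Classical.choose q.2).1, (Classical.choose q.2).2 ++ [β])), by
      have hspec := Classical.choose_spec q.2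
      exact hc β _ ⟨q.1.1, Classical.choose q.2, hspec.1, rfl⟩⟩
  obs := fun q β => q.1.2 ([], β)
  spell := by
    rintro q q' α β (h | h | h) <;> exact congrArg (fun x => x.1.1) h

/-- The set of all table prefixes `⋃_{α} (S_α ∪ S'_α)`. -/
def ObsTable.prefixes (T : ObsTable F V) : Set (GPrefix F V) :=
  {p | ∃ α, p ∈ T.S α ∨ p ∈ T.Sx α}

section Lemmas

variable (L : Set (GString F V)) (T : ObsTable F V) (hc : T.Closed L)

lemma run_append {Q : Type} (M : PNKA F V Q) (w : List (Packet F V)) :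
    ∀ (q : Q) (m : List (Packet F V)) (β : Packet F V),
      M.run q (w ++ m) β = M.run (w.foldl M.tr q) m β := by
  induction w with
  | nil => intro q m β; rfl
  | cons γ w ih => intro q m β; simpa [PNKA.run] using ih (M.tr q γ) m β

lemma foldl_fst (w : List (Packet F V)) :
    ∀ q : HState L T, ((w.foldl (hypAut L T hc).tr q).1.1) = w.getLast?.getD q.1.1 := by
  induction w with
  | nil => intro q; rfl
  | cons γ w ih =>
      intro q
      have : ((hypAut L T hc).tr q γ).1.1 = γ := rfl
      cases w with
      | nil => simpa using this
      | cons c w =>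
          obtain ⟨x, hx⟩ := Option.isSome_iff_exists.mp
            (List.getLast?_isSome.mpr (List.cons_ne_nil c w))
          have h1 := ih ((hypAut L T hc).tr q γ)
          rw [hx, Option.getD_some] at h1
          rw [List.getLast?_cons_cons, hx, Option.getD_some]
          exact h1

lemma dplus_fst (p : GPrefix F V) :
    ((hypAut L T hc).dplus p).1.1 = lastP p :=
  foldl_fst L T hc p.2 _

lemma mem_E_of_row (q : HState L T) (e : GSuffix F V) (h : q.1.2 e = true) :
    e ∈ T.E q.1.1 := by
  obtain ⟨r, hr, hrow⟩ := q.2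
  rw [← hrow] at h
  simp only [rowF, decide_eq_true_eq] at h
  exact h.1

lemma run_eq_row (hsc : T.SufClosed) :
    ∀ (m : List (Packet F V)) (q : HState L T) (β : Packet F V),
      (m, β) ∈ T.E q.1.1 → (hypAut L T hc).run q m β = q.1.2 (m, β) := by
  intro m
  induction m with
  | nil => intro q β _; rfl
  | cons γ m ih =>
      intro q β hmem
      have hmem' : (m, β) ∈ T.E γ := hsc q.1.1 γ m β hmem
      have hspec := Classical.choose_spec q.2
      set r := Classical.choose q.2 with hr
      have hstep : (hypAut L T hc).run q (γ :: m) β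
          = (hypAut L T hc).run ((hypAut L T hc).tr q γ) m β := rfl
      rw [hstep, ih _ β (by simpa [hypAut] using hmem')]
      have h2 : ((hypAut L T hc).tr q γ).1.2
          = rowF L T γ (r.1, r.2 ++ [γ]) := rfl
      rw [h2, ← hspec.2]
      simp only [rowF, sdot]
      apply decide_eq_decide.mpr
      have hx : r.2 ++ [γ] ++ m = r.2 ++ γ :: m := by simp
      rw [hx]
      tauto

lemma runs_eq_of_mn (hmn : MN ((hypAut L T hc).lang) s t) :
    lastP s = lastP t ∧
      ∀ (m : List (Packet F V)) (β : Packet F V),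
        (hypAut L T hc).run ((hypAut L T hc).dplus s) m β
          = (hypAut L T hc).run ((hypAut L T hc).dplus t) m β := by
  have hlast : lastP s = lastP t := by
    have h1 := (hmn (lastP s, [], lastP s)).1
    by_contra hne
    rw [pconcat, pconcat, if_pos rfl, if_neg (fun h => hne h.symm)] at h1
    simp at h1
  refine ⟨hlast, fun m β => ?_⟩
  have h := (hmn (lastP s, m, β)).2
  have hs : pconcat s (lastP s, m, β) = some (s.1, s.2 ++ m, β) := by
    simp [pconcat]
  have ht : pconcat t (lastP s, m, β) = some (t.1, t.2 ++ m, β) := by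
    simp [pconcat, ← hlast]
  have hiff := h _ (by rw [hs]; rfl) _ (by rw [ht]; rfl)
  simp only [PNKA.lang, Set.mem_setOf_eq] at hiff
  have hs' : (hypAut L T hc).run ((hypAut L T hc).q0 s.1) (s.2 ++ m) β
      = (hypAut L T hc).run ((hypAut L T hc).dplus s) m β := run_append _ _ _ _ _
  have ht' : (hypAut L T hc).run ((hypAut L T hc).q0 t.1) (t.2 ++ m) β
      = (hypAut L T hc).run ((hypAut L T hc).dplus t) m β := run_append _ _ _ _ _
  rw [hs', ht'] at hiff
  exact Bool.eq_iff_iff.mpr hiff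

end Lemmas

/-- Let `T` be a closed, consistent, and suffix-closed
observation table for `L`, and let `H := H(T)` be the hypothesis PNKA. Then
for all prefixes `s, t`: `∂⁺(s) = ∂⁺(t)` (computed in `H`) if and only if
`s ≡_{L(H)} t`. -/
theorem hyp_state_equiv_iff_mn (L : Set (GString F V)) (T : ObsTable F V)
    (hc : T.Closed L) (hcons : T.Consistent L) (hsc : T.SufClosed)
    (s t : GPrefix F V) :
    (hypAut L T hc).dplus s = (hypAut L T hc).dplus t ↔
      MN ((hypAut L T hc).lang) s t := by
  constructor
  · intro h g
    have hlast : lastP s = lastP t := by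
      rw [← dplus_fst L T hc s, ← dplus_fst L T hc t, h]
    constructor
    · rw [pconcat, pconcat, hlast]
      by_cases hcond : lastP t = g.1 <;> simp [hcond]
    · intro x hx y hy
      by_cases hcond : lastP s = g.1
      · rw [pconcat, if_pos hcond] at hx
        rw [pconcat, if_pos (hlast ▸ hcond)] at hy
        simp only [Option.mem_def, Option.some_inj] at hx hy
        subst hx; subst hy
        simp only [PNKA.lang, Set.mem_setOf_eq]
        rw [run_append, run_append]
        show (hypAut L T hc).run ((hypAut L T hc).dplus s) _ _ = true ↔
          (hypAut L T hc).run ((hypAut L T hc).dplus t) _ _ = true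
        rw [h]
      · rw [pconcat, if_neg hcond] at hx
        simp at hx
  · intro hmn
    obtain ⟨hlast, hruns⟩ := runs_eq_of_mn L T hc hmn
    have hfs : ((hypAut L T hc).dplus s).1.1 = lastP s := dplus_fst L T hc s
    have hft : ((hypAut L T hc).dplus t).1.1 = lastP s := by
      rw [dplus_fst L T hc t, hlast]
    apply Subtype.ext
    apply Prod.ext
    · rw [hfs, hft]
    · funext e
      obtain ⟨m, β⟩ := e
      by_cases he : (m, β) ∈ T.E (lastP s)
      · rw [← run_eq_row L T hc hsc m _ β (by rw [hfs]; exact he),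
            ← run_eq_row L T hc hsc m _ β (by rw [hft]; exact he)]
        exact hruns m β
      · have h1 : ((hypAut L T hc).dplus s).1.2 (m, β) = false := by
          by_contra hb
          exact he (hfs ▸ mem_E_of_row L T ((hypAut L T hc).dplus s) (m, β)
            (eq_true_of_ne_false hb))
        have h2 : ((hypAut L T hc).dplus t).1.2 (m, β) = false := by
          by_contra hb
          exact he (hft ▸ mem_E_of_row L T ((hypAut L T hc).dplus t) (m, β)
            (eq_true_of_ne_false hb))
        rw [h1, h2]

end NetKATLearn
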